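/- Let G be a definition for a set Q ⊆ σ of atoms and let I be an interpretation satisfying G. Then for any subset K of I with K \ Q = I \ Q, K satisfies the reduct G^I if and only if K satisfies G. -/

import Mathlib

/-- Infinitary propositional formulas over signature `σ`:
atoms, conjunctions and disjunctions of (index-)sets of formulas, implication. -/
inductive Formula (σ : Type) : Type 1
  | atom : σ → Formula σ
  | conj : (ι : Type) → (ι → Formula σ) → Formula σ
  | disj : (ι : Type) → (ι → Formula σ) → Formula σ
  | imp : Formula σ → Formula σ → Formula σ

namespace Formula

variable {σ : Type}

/-- `⊥` is the empty disjunction. -/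
def bot : Formula σ := Formula.disj Empty (fun e => e.elim)

/-- Binary conjunction `F ∧ G`. -/
def and (F G : Formula σ) : Formula σ := Formula.conj Bool (fun b => if b then F else G)

/-- Binary disjunction `F ∨ G`. -/
def or (F G : Formula σ) : Formula σ := Formula.disj Bool (fun b => if b then F else G)

/-- Negation `¬F` abbreviates `F → ⊥`. -/
def neg (F : Formula σ) : Formula σ := Formula.imp F bot

/-- Conjunction of a set of atoms. -/
def conjAtoms (S : Set σ) : Formula σ := Formula.conj S (fun p => Formula.atom p.val)

/-- Satisfaction of an infinitary formula by an interpretation `I ⊆ σ`. -/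
def Sat (I : Set σ) : Formula σ → Prop
  | .atom p => p ∈ I
  | .conj _ f => ∀ i, Sat I (f i)
  | .disj _ f => ∃ i, Sat I (f i)
  | .imp F G => Sat I F → Sat I G

open Classical in
/-- The reduct `F^I`. -/
noncomputable def reduct (I : Set σ) : Formula σ → Formula σ
  | .atom p => if p ∈ I then Formula.atom p else bot
  | .conj ι f => Formula.conj ι (fun i => reduct I (f i))
  | .disj ι f => Formula.disj ι (fun i => reduct I (f i))
  | .imp F G => if Sat I (Formula.imp F G) then Formula.imp (reduct I F) (reduct I G) else bot

/-- `I` is an `A`-stable model of `F`: `I` is minimal w.r.t. `≤_A`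
(`J ≤_A I` iff `J ⊆ I` and `I \ J ⊆ A`) among interpretations satisfying `F^I`. -/
def AStable (A : Set σ) (I : Set σ) (F : Formula σ) : Prop :=
  Sat I (reduct I F) ∧ ∀ J : Set σ, J ⊆ I → I \ J ⊆ A → Sat J (reduct I F) → J = I

/-- A stable model is a `σ`-stable model. -/
def Stable (I : Set σ) (F : Formula σ) : Prop := AStable Set.univ I F

/-- The strictly positive atoms `P(F)`. -/
def spos : Formula σ → Set σ
  | .atom p => {p}
  | .conj _ f => ⋃ i, spos (f i)
  | .disj _ f => ⋃ i, spos (f i)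
  | .imp _ H => spos H

/-- `F` is (syntactically) the formula `⊥`, i.e. an empty disjunction. -/
def IsBot : Formula σ → Prop
  | .disj ι _ => IsEmpty ι
  | _ => False

open Classical in
mutual
/-- Positive nonnegated atoms `Pnn(F)`. -/
noncomputable def pnn : Formula σ → Set σ
  | .atom p => {p}
  | .conj _ f => ⋃ i, pnn (f i)
  | .disj _ f => ⋃ i, pnn (f i)
  | .imp G H => if IsBot H then ∅ else nnn G ∪ pnn H

/-- Negative nonnegated atoms `Nnn(F)`. -/
noncomputable def nnn : Formula σ → Set σ
  | .atom _ => ∅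
  | .conj _ f => ⋃ i, nnn (f i)
  | .disj _ f => ⋃ i, nnn (f i)
  | .imp G H => if IsBot H then ∅ else pnn G ∪ nnn H
end

/-- The rules of a formula, as antecedent/consequent pairs. -/
def rules : Formula σ → Set (Formula σ × Formula σ)
  | .atom _ => ∅
  | .conj _ f => ⋃ i, rules (f i)
  | .disj _ f => ⋃ i, rules (f i)
  | .imp G H => insert (G, H) (rules H)

/-- Edge relation of the positive dependency graph `DG_A[F]` (vertex set `A`). -/
noncomputable def DGEdge (F : Formula σ) (A : Set σ) (p q : σ) : Prop :=
  p ∈ A ∧ q ∈ A ∧ ∃ R ∈ rules F, p ∈ spos R.2 ∧ q ∈ pnn R.1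

/-- The atoms occurring in a formula. -/
def atoms : Formula σ → Set σ
  | .atom p => {p}
  | .conj _ f => ⋃ i, atoms (f i)
  | .disj _ f => ⋃ i, atoms (f i)
  | .imp G H => atoms G ∪ atoms H

/-- `G` is a definition for the set `Q` of atoms: a conjunction of formulas
`H ∧ C^∧ → q` with `q ∈ Q`, `C ⊆ Q`, and no atom of `Q` occurring in `H`. -/
def IsDefinition (Q : Set σ) (G : Formula σ) : Prop :=
  ∃ (ι : Type) (g : ι → Formula σ), G = Formula.conj ι g ∧
    ∀ i, ∃ (H : Formula σ) (C : Set σ) (q : σ),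
      q ∈ Q ∧ C ⊆ Q ∧ (∀ p ∈ Q, p ∉ atoms H) ∧
      g i = Formula.imp (Formula.and H (conjAtoms C)) (Formula.atom q)

end Formula

section Graph

variable {V : Type*}

/-- An infinite walk in the directed graph with edge relation `E`. -/
def IsInfWalk (E : V → V → Prop) (w : ℕ → V) : Prop := ∀ i, E (w i) (w (i + 1))

/-- The partition `{P₁, P₂}` is infinitely separable: every infinite walk
visits `P₁` or `P₂` only finitely often. -/
def InfSeparable (E : V → V → Prop) (P1 P2 : Set V) : Prop :=
  ∀ w : ℕ → V, IsInfWalk E w → {i | w i ∈ P1}.Finite ∨ {i | w i ∈ P2}.Finite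

/-- `u` and `v` are in the same strongly connected component:
each is reachable from the other. -/
def SameSCC (E : V → V → Prop) (u v : V) : Prop :=
  Relation.ReflTransGen E u v ∧ Relation.ReflTransGen E v u

/-- The partition `{P₁, P₂}` is separable: every strongly connected
component is contained in `P₁` or in `P₂`. -/
def Separable (E : V → V → Prop) (P1 P2 : Set V) : Prop :=
  ∀ u v, SameSCC E u v → ((u ∈ P1 ∧ v ∈ P1) ∨ (u ∈ P2 ∧ v ∈ P2))

end Graph

/-!
Satisfaction depends only on the atoms of a formula, and the reduct `F^I` contains no atoms
beyond those of `F`; so wherever `K` and `I` agree on the atoms of `F`, `K ⊨ F^I` iff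
`I ⊨ F^I` iff `I ⊨ F`. In a rule `H ∧ C^∧ → q` of a definition for `Q`, the interpretations
`K` and `I` agree on `H`, which avoids `Q`, while on the atoms of `C` and `q` the reduct only
replaces atoms outside `I` by `⊥`, and those are false in `K ⊆ I` anyway.
-/

namespace Formula

variable {σ : Type} {I K : Set σ}

theorem not_sat_bot : ¬ Sat K (bot : Formula σ) := fun ⟨e, _⟩ => e.elim

theorem sat_and {F G : Formula σ} : Sat K (F.and G) ↔ Sat K F ∧ Sat K G :=
  ⟨fun h => ⟨h true, h false⟩, fun ⟨hF, hG⟩ b => by cases b <;> assumption⟩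

theorem sat_conjAtoms {C : Set σ} : Sat K (conjAtoms C) ↔ C ⊆ K :=
  ⟨fun h p hp => h ⟨p, hp⟩, fun h p => h p.2⟩

theorem reduct_and (F G : Formula σ) : reduct I (F.and G) = (reduct I F).and (reduct I G) := by
  simp only [and, reduct]
  congr 1
  funext b
  cases b <;> rfl

theorem reduct_imp_of_sat {F G : Formula σ} (h : Sat I (imp F G)) :
    reduct I (imp F G) = imp (reduct I F) (reduct I G) := by
  simp only [reduct, if_pos h]

theorem sat_congr {F : Formula σ} (h : ∀ p ∈ F.atoms, p ∈ K ↔ p ∈ I) : Sat K F ↔ Sat I F := by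
  induction F with
  | atom p => exact h p rfl
  | conj ι f ih => exact forall_congr' fun i => ih i fun p hp => h p (Set.mem_iUnion.2 ⟨i, hp⟩)
  | disj ι f ih => exact exists_congr fun i => ih i fun p hp => h p (Set.mem_iUnion.2 ⟨i, hp⟩)
  | imp F G ihF ihG =>
    exact imp_congr (ihF fun p hp => h p (Or.inl hp)) (ihG fun p hp => h p (Or.inr hp))

theorem atoms_bot : (bot : Formula σ).atoms = ∅ :=
  Set.iUnion_of_empty _

theorem atoms_reduct_subset (F : Formula σ) : (reduct I F).atoms ⊆ F.atoms := by
  induction F with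
  | atom p =>
    simp only [reduct]
    split_ifs
    · exact subset_rfl
    · simp [atoms_bot]
  | conj ι f ih => exact Set.iUnion_mono ih
  | disj ι f ih => exact Set.iUnion_mono ih
  | imp F G ihF ihG =>
    simp only [reduct]
    split_ifs
    · exact Set.union_subset_union ihF ihG
    · simp [atoms_bot]

theorem sat_reduct_self (F : Formula σ) : Sat I (reduct I F) ↔ Sat I F := by
  induction F with
  | atom p =>
    simp only [reduct]
    split_ifs with hp
    · exact Iff.rfl
    · exact iff_of_false not_sat_bot hp
  | conj ι f ih => exact forall_congr' ih
  | disj ι f ih => exact exists_congr ih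
  | imp F G ihF ihG =>
    by_cases hFG : Sat I (imp F G)
    · rw [reduct_imp_of_sat hFG]
      exact imp_congr ihF ihG
    · simp only [reduct, if_neg hFG]
      exact iff_of_false not_sat_bot hFG

theorem sat_reduct_iff_of_agree {F : Formula σ} (h : ∀ p ∈ F.atoms, p ∈ K ↔ p ∈ I) :
    Sat K (reduct I F) ↔ Sat I F :=
  (sat_congr fun p hp => h p (atoms_reduct_subset F hp)).trans (sat_reduct_self F)

theorem sat_reduct_atom_of_subset (hKI : K ⊆ I) {p : σ} :
    Sat K (reduct I (atom p)) ↔ p ∈ K := by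
  simp only [reduct]
  split_ifs with hp
  · exact Iff.rfl
  · exact iff_of_false not_sat_bot fun hpK => hp (hKI hpK)

theorem sat_reduct_conjAtoms_of_subset (hKI : K ⊆ I) {C : Set σ} :
    Sat K (reduct I (conjAtoms C)) ↔ C ⊆ K :=
  (forall_congr' fun _ => sat_reduct_atom_of_subset hKI).trans sat_conjAtoms

theorem sat_reduct_rule_iff_of_subset (hKI : K ⊆ I) {H : Formula σ} {C : Set σ} {q : σ}
    (hH : ∀ p ∈ H.atoms, p ∈ K ↔ p ∈ I) (hrule : Sat I (imp (H.and (conjAtoms C)) (atom q))) :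
    Sat K (reduct I (imp (H.and (conjAtoms C)) (atom q))) ↔
      Sat K (imp (H.and (conjAtoms C)) (atom q)) := by
  rw [reduct_imp_of_sat hrule]
  simp only [Sat, reduct_and, sat_and, sat_reduct_iff_of_agree hH, sat_congr hH,
    sat_conjAtoms, sat_reduct_conjAtoms_of_subset hKI, sat_reduct_atom_of_subset hKI]

end Formula

/-- if `G` is a definition for `Q`, `I ⊨ G`, `K ⊆ I` and
`K \ Q = I \ Q`, then `K ⊨ G^I` iff `K ⊨ G`. -/
theorem sat_reduct_iff_sat_of_definition {σ : Type} (Q : Set σ) (G : Formula σ)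
    (hdef : Formula.IsDefinition Q G) (I : Set σ) (hI : Formula.Sat I G)
    (K : Set σ) (hKI : K ⊆ I) (hKQ : K \ Q = I \ Q) :
    Formula.Sat K (Formula.reduct I G) ↔ Formula.Sat K G := by
  obtain ⟨ι, g, rfl, hg⟩ := hdef
  have hagree : ∀ p ∉ Q, p ∈ K ↔ p ∈ I := fun p hpQ =>
    ⟨(hKI ·), fun hpI => (hKQ ▸ ⟨hpI, hpQ⟩ : p ∈ K \ Q).1⟩
  simp only [Formula.reduct, Formula.Sat]
  refine forall_congr' fun i => ?_
  obtain ⟨H, C, q, -, -, hHQ, hgi⟩ := hg i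
  have hIi := hI i
  rw [hgi] at hIi ⊢
  exact Formula.sat_reduct_rule_iff_of_subset hKI
    (fun p hp => hagree p fun hpQ => hHQ p hpQ hp) hIi
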